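/- arXiv:math/0309330 — 3 statements merged into one kernel-verified Lean document; each statement's English description precedes it below -/
import Mathlib

section
/- If Γ is an ordinary graph with node set [n], then every vertex of the inside-out polytope ([0,1]^n, H[Γ]) is an integer point; that is, every point of [0,1]^n that is an intersection point formed by hyperplanes of H[Γ] and facet hyperplanes of [0,1]^n lies in ℤ^n. -/
open scoped Classical
open MeasureTheory

noncomputable section

/-- We model `ℝ^d` as `Fin d → ℝ`. -/
abbrev EucSp (d : ℕ) : Type := Fin d → ℝ

/-- An (affine, nondegenerate) hyperplane in `ℝ^d`: the solution set of a nontrivial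
affine-linear equation. -/
def IsAffineHyperplane {d : ℕ} (h : Set (EucSp d)) : Prop :=
  ∃ (a : EucSp d) (b : ℝ), a ≠ 0 ∧ h = {x : EucSp d | (∑ i, a i * x i) = b}

/-- The union of the hyperplanes of an arrangement. -/
def arrUnion {d : ℕ} (H : Finset (Set (EucSp d))) : Set (EucSp d) :=
  ⋃ h ∈ H, (h : Set (EucSp d))

/-- The flats of an arrangement: all nonempty intersections of subcollections
(the empty intersection being the whole space `ℝ^d`). -/
def flatsOf {d : ℕ} (H : Finset (Set (EucSp d))) : Finset (Set (EucSp d)) :=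
  (H.powerset.image fun S => ⋂ h ∈ S, (h : Set (EucSp d))).filter fun u => u.Nonempty

/-- `μ` is the Möbius function of the intersection poset of flats of `H`, ordered by
reverse inclusion (mimimum element `Set.univ`):  `μ a b` is defined whenever `b ⊆ a`
by the standard recursion `∑_{b ⊆ w ⊆ a} μ a w = δ_{a b}`. -/
def IsMobiusOf {d : ℕ} (H : Finset (Set (EucSp d)))
    (μ : Set (EucSp d) → Set (EucSp d) → ℤ) : Prop :=
  ∀ a ∈ flatsOf H, ∀ b ∈ flatsOf H, b ⊆ a →
    (∑ w ∈ (flatsOf H).filter fun w => b ⊆ w ∧ w ⊆ a, μ a w) = if a = b then 1 else 0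

/-- A discrete (i.e. locally finite) set of points in `ℝ^d`. -/
def LocallyFiniteSet {d : ℕ} (D : Set (EucSp d)) : Prop :=
  ∀ x : EucSp d, ∃ U ∈ nhds x, (D ∩ U).Finite

/-- The arrangement `H` is transverse to the convex set `C`: every flat meeting the closure
of `C` meets its relative interior, and `C` lies in no hyperplane of `H`. -/
def TransverseTo {d : ℕ} (H : Finset (Set (EucSp d))) (C : Set (EucSp d)) : Prop :=
  (∀ u ∈ flatsOf H, (u ∩ closure C).Nonempty → (u ∩ intrinsicInterior ℝ C).Nonempty) ∧
    ∀ h ∈ H, ¬ C ⊆ h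

/-- The closed regions determined by the arrangement `H` inside the set `S`:
topological closures of connected components of `S ∖ ⋃H`. -/
def closedRegionsOf {d : ℕ} (S : Set (EucSp d)) (H : Finset (Set (EucSp d))) :
    Set (Set (EucSp d)) :=
  {R | ∃ y ∈ S \ arrUnion H, R = closure (connectedComponentIn (S \ arrUnion H) y)}

/-- Multiplicity of a point: the number of closed regions (components taken inside `S`)
containing it, provided the point lies in `C`; otherwise `0`. -/
def multOf {d : ℕ} (C S : Set (EucSp d)) (H : Finset (Set (EucSp d))) (x : EucSp d) : ℕ :=
  if x ∈ C then {R | R ∈ closedRegionsOf S H ∧ x ∈ R}.ncard else 0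

/-- The dimension of a flat (an affine subspace), as the rank of its direction. -/
def flatDim {d : ℕ} (u : Set (EucSp d)) : ℕ := Module.finrank ℝ (vectorSpan ℝ u)


/-- The graphic hyperplane arrangement `H[Γ] = { x_i = x_j : ij ∈ E(Γ) }` in `ℝ^n`
(an edge is an unordered pair, possibly a loop, and loops give the degenerate
hyperplane `ℝ^n`). -/
def graphArrangement (n : ℕ) (E : Multiset (Sym2 (Fin n))) : Finset (Set (EucSp n)) :=
  E.toFinset.image fun e => {x : EucSp n | ∀ i j : Fin n, e = s(i, j) → x i = x j}

/-- The integer lattice `ℤ^n ⊆ ℝ^n`. -/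
def integerLattice (n : ℕ) : Set (EucSp n) := {x : EucSp n | ∀ i, ∃ k : ℤ, x i = (k : ℝ)}

/-- The unit cube `[0,1]^n`. -/
def unitCube (n : ℕ) : Set (EucSp n) := Set.pi Set.univ fun _ : Fin n => Set.Icc (0 : ℝ) 1

/-- The number of proper `c`-colorings of the graph with node set `[n]` and edge
multiset `E`, i.e. the chromatic polynomial evaluated at `c`. -/
def properColorings (n : ℕ) (E : Multiset (Sym2 (Fin n))) (c : ℕ) : ℕ :=
  Set.ncard {x : Fin n → Fin c | ∀ e ∈ E, ∀ i j : Fin n, e = s(i, j) → x i ≠ x j}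

/-! If some coordinate value `c = x i` of a vertex `x` is not an integer, then `c ∉ {0, 1}`,
so raising every coordinate equal to `c` by the same amount keeps `x` on each graphic
hyperplane `x_j = x_k` (equal coordinates stay equal) and on each facet hyperplane of the
cube containing it (coordinates `0` and `1` are untouched). This moves `x` inside the
intersection, which therefore is not the single point `x`. -/

def shiftLevel {n : ℕ} (x : EucSp n) (c t : ℝ) : EucSp n :=
  fun j => if x j = c then x j + t else x j

theorem shiftLevel_apply_self {n : ℕ} (x : EucSp n) (i : Fin n) (t : ℝ) :
    shiftLevel x (x i) t i = x i + t :=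
  if_pos rfl

theorem shiftLevel_apply_of_ne {n : ℕ} {x : EucSp n} {c : ℝ} {j : Fin n} (h : x j ≠ c)
    (t : ℝ) : shiftLevel x c t j = x j :=
  if_neg h

theorem shiftLevel_apply_eq_of_apply_eq {n : ℕ} {x : EucSp n} {j k : Fin n}
    (h : x j = x k) (c t : ℝ) : shiftLevel x c t j = shiftLevel x c t k := by
  simp only [shiftLevel, h]

theorem shiftLevel_mem_of_mem_graphArrangement {n : ℕ} {E : Multiset (Sym2 (Fin n))}
    {h : Set (EucSp n)} (hE : h ∈ graphArrangement n E) {x : EucSp n} (hx : x ∈ h)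
    (c t : ℝ) : shiftLevel x c t ∈ h := by
  obtain ⟨e, -, rfl⟩ := Finset.mem_image.mp hE
  exact fun j k hjk => shiftLevel_apply_eq_of_apply_eq (hx j k hjk) c t

theorem eq_of_forall_mem_of_sInter_eq_singleton {α : Type*} {S : Set (Set α)} {x : α}
    (hS : ⋂₀ S = {x}) {y : α} (hy : ∀ h ∈ S, x ∈ h → y ∈ h) : y = x := by
  have hx : x ∈ ⋂₀ S := hS ▸ rfl
  have hy' : y ∈ ⋂₀ S := fun h hh => hy h hh (hx h hh)
  rwa [hS] at hy'

/-- Lemma 5.3: the inside-out polytope `([0,1]^n, H[Γ])` of an ordinary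
graph has integer vertices: every point of `[0,1]^n` cut out as the intersection of a
collection of hyperplanes of `H[Γ]` and facet hyperplanes of the cube lies in `ℤ^n`. -/
theorem statement11 (n : ℕ) (E : Multiset (Sym2 (Fin n))) :
    ∀ x : EucSp n, x ∈ unitCube n →
      ∀ S : Set (Set (EucSp n)),
        (∀ h ∈ S, h ∈ graphArrangement n E ∨
          ∃ i : Fin n, h = {y : EucSp n | y i = 0} ∨ h = {y : EucSp n | y i = 1}) →
        ⋂₀ S = {x} →
        x ∈ integerLattice n := by
  intro x _ S hS hSx
  by_contra hx
  obtain ⟨i, hi⟩ : ∃ i, ∀ k : ℤ, x i ≠ k := by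
    simpa [integerLattice] using hx
  have hi0 : x i ≠ 0 := by exact_mod_cast hi 0
  have hi1 : x i ≠ 1 := by exact_mod_cast hi 1
  have hfixed : shiftLevel x (x i) 1 = x := by
    refine eq_of_forall_mem_of_sInter_eq_singleton hSx fun h hh hxh => ?_
    rcases hS h hh with hE | ⟨k, rfl | rfl⟩
    · exact shiftLevel_mem_of_mem_graphArrangement hE hxh _ _
    · exact (shiftLevel_apply_of_ne (hxh.trans_ne hi0.symm) 1).trans hxh
    · exact (shiftLevel_apply_of_ne (hxh.trans_ne hi1.symm) 1).trans hxh
  have hshift : x i + 1 = x i := (shiftLevel_apply_self x i 1).symm.trans (congrFun hfixed i)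
  linarith
end
end

section
/- If Σ is a signed graph with node set [n], then every vertex of the inside-out polytope ([0,1]^n, H''[Σ]) is half-integral; that is, every point of [0,1]^n that is an intersection point formed by hyperplanes of H''[Σ] and facet hyperplanes of [0,1]^n lies in (1/2)ℤ^n, where H''[Σ] := H[Σ] + (1/2)(1,…,1). -/
open scoped Classical
open MeasureTheory

noncomputable section

/-- The value `+1` or `−1` of a sign. -/
def sgnVal (b : Bool) : ℤ := if b then 1 else -1

/-- A signed graph on node set `[n]` is given by: `m` signed edges (links and loops) with
endpoints `ends e : Sym2 (Fin n)` and sign `sgn e`, a set `half` of nodes carrying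
halfedges, and a flag `loose` indicating the presence of a loose edge.
`SgProper` says the coloring `x` is proper. -/
def SgProper {n m : ℕ} (ends : Fin m → Sym2 (Fin n)) (sgn : Fin m → Bool)
    (half : Finset (Fin n)) (loose : Bool) (x : Fin n → ℤ) : Prop :=
  loose = false ∧
  (∀ e : Fin m, ∀ i j : Fin n, ends e = s(i, j) → x j ≠ sgnVal (sgn e) * x i) ∧
  ∀ i ∈ half, x i ≠ 0

/-- The chromatic polynomial of a signed graph: `sgChi … c = χ_Σ(2c+1)` counts proper
colorings with values in `{−c, …, 0, …, c}`. -/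
def sgChi {n m : ℕ} (ends : Fin m → Sym2 (Fin n)) (sgn : Fin m → Bool)
    (half : Finset (Fin n)) (loose : Bool) (c : ℕ) : ℕ :=
  Set.ncard {x : Fin n → ℤ | (∀ i, |x i| ≤ (c : ℤ)) ∧ SgProper ends sgn half loose x}

/-- The zero-free chromatic polynomial of a signed graph: `sgChiStar … c = χ*_Σ(2c)` counts
proper colorings with values in `±{1, …, c}`. -/
def sgChiStar {n m : ℕ} (ends : Fin m → Sym2 (Fin n)) (sgn : Fin m → Bool)
    (half : Finset (Fin n)) (loose : Bool) (c : ℕ) : ℕ :=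
  Set.ncard {x : Fin n → ℤ |
    (∀ i, x i ≠ 0 ∧ |x i| ≤ (c : ℤ)) ∧ SgProper ends sgn half loose x}

/-- The signed-graphic hyperplane arrangement `H[Σ]` in `ℝ^n`: the hyperplanes
`x_j = ε x_i` for signed edges, `x_i = 0` for halfedges, and the degenerate hyperplane
`ℝ^n` when a loose edge is present (a positive loop also yields `ℝ^n`). -/
def sgArrangement {n m : ℕ} (ends : Fin m → Sym2 (Fin n)) (sgn : Fin m → Bool)
    (half : Finset (Fin n)) (loose : Bool) : Finset (Set (EucSp n)) :=
  ((Finset.univ : Finset (Fin m)).image fun e =>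
      {x : EucSp n | ∀ i j : Fin n, ends e = s(i, j) → x j = (sgnVal (sgn e) : ℝ) * x i}) ∪
    (half.image fun i => {x : EucSp n | x i = 0}) ∪
    (if loose then {(Set.univ : Set (EucSp n))} else ∅)

/-- The translated arrangement `H''[Σ] = H[Σ] + ½(1,…,1)`. -/
def sgArrangementShifted {n m : ℕ} (ends : Fin m → Sym2 (Fin n)) (sgn : Fin m → Bool)
    (half : Finset (Fin n)) (loose : Bool) : Finset (Set (EucSp n)) :=
  (sgArrangement ends sgn half loose).image fun h =>
    (fun y : EucSp n => y + (fun _ : Fin n => (1 / 2 : ℝ))) '' h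

/-! Every hyperplane of `H''[Σ]` reads `x_j - ½ = ±(x_i - ½)` or `x_i = ½` (or is all of `ℝ^n`), so
together with the facet hyperplanes `x_i = 0`, `x_i = 1` of the cube it is mapped into itself by
the coordinatewise map `x ↦ (f x_j)_j` for any `f` with `f 0 = 0` and `f (1 - t) = 1 - f t`.
A vertex is the only point of the intersection of its hyperplanes, hence a fixed point of every
such map. For `f t = t + sin (2πt)` the fixed points are exactly the half-integers. -/

open Real

section CubeSymmetric

variable {f : ℝ → ℝ}

theorem apply_one_of_symm (hf0 : f 0 = 0) (hf : ∀ t, f (1 - t) = 1 - f t) : f 1 = 1 := by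
  simpa [hf0] using hf 0

theorem apply_half_of_symm (hf : ∀ t, f (1 - t) = 1 - f t) : f (1 / 2) = 1 / 2 := by
  have h := hf (1 / 2)
  norm_num at h
  linarith

theorem apply_sub_half_eq_sgnVal_mul (hf : ∀ t, f (1 - t) = 1 - f t) (ε : Bool) {s t : ℝ}
    (h : t - 1 / 2 = sgnVal ε * (s - 1 / 2)) : f t - 1 / 2 = sgnVal ε * (f s - 1 / 2) := by
  cases ε with
  | true =>
    obtain rfl : t = s := by simpa [sgnVal] using h
    simp [sgnVal]
  | false =>
    simp only [sgnVal, Bool.false_eq_true, ↓reduceIte, Int.cast_neg, Int.cast_one] at h ⊢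
    obtain rfl : t = 1 - s := by linarith
    rw [hf]
    ring

theorem mapsTo_comp_setOf_apply_eq {n : ℕ} (i : Fin n) {a : ℝ} (ha : f a = a) :
    Set.MapsTo (fun y : EucSp n => f ∘ y) {y | y i = a} {y | y i = a} := by
  intro y hy
  simp_all

theorem mapsTo_comp_of_mem_sgArrangementShifted (hf : ∀ t, f (1 - t) = 1 - f t)
    {n m : ℕ} {ends : Fin m → Sym2 (Fin n)} {sgn : Fin m → Bool} {half : Finset (Fin n)}
    {loose : Bool} {h : Set (EucSp n)} (hh : h ∈ sgArrangementShifted ends sgn half loose) :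
    Set.MapsTo (fun y : EucSp n => f ∘ y) h h := by
  obtain ⟨h₀, hh₀, rfl⟩ := Finset.mem_image.mp hh
  simp only [Set.image_add_right]
  intro y hy
  simp only [sgArrangement, Finset.mem_union, Finset.mem_image, Finset.mem_univ, true_and] at hh₀
  rcases hh₀ with (⟨e, rfl⟩ | ⟨j, -, rfl⟩) | hloose
  · intro i j hij
    have := hy i j hij
    simp only [Pi.add_apply, Pi.neg_apply, ← sub_eq_add_neg] at this ⊢
    exact apply_sub_half_eq_sgnVal_mul hf (sgn e) this
  · have : y j = 1 / 2 := by simpa [sub_eq_zero, ← sub_eq_add_neg] using hy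
    simp only [Set.mem_preimage, Set.mem_ofPred_eq, Pi.add_apply, Pi.neg_apply,
      Function.comp_apply, this, apply_half_of_symm hf]
    norm_num
  · cases loose <;> simp_all

end CubeSymmetric

theorem eq_of_mapsTo_of_sInter_eq_singleton {α : Type*} {Φ : α → α} {S : Set (Set α)} {x : α}
    (hΦ : ∀ h ∈ S, Set.MapsTo Φ h h) (hx : ⋂₀ S = {x}) : Φ x = x := by
  have hxS : x ∈ ⋂₀ S := hx ▸ rfl
  simpa [hx] using (Set.mem_sInter.mpr fun h hh => hΦ h hh (hxS h hh) : Φ x ∈ ⋂₀ S)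

theorem one_sub_add_sin_two_pi_mul (t : ℝ) :
    1 - t + sin (2 * π * (1 - t)) = 1 - (t + sin (2 * π * t)) := by
  rw [mul_one_sub, sin_two_pi_sub]
  ring

theorem exists_int_eq_div_two_of_sin_two_pi_mul_eq_zero (t : ℝ) (h : sin (2 * π * t) = 0) :
    ∃ k : ℤ, t = k / 2 := by
  obtain ⟨k, hk⟩ := sin_eq_zero_iff.mp h
  have hk' : (k : ℝ) * π = 2 * t * π := by linarith
  exact ⟨k, by linarith [mul_right_cancel₀ pi_ne_zero hk']⟩

/-- Lemma 5.7: the inside-out polytope `([0,1]^n, H''[Σ])` of a signed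
graph has half-integral vertices: every point of `[0,1]^n` cut out as the intersection of a
collection of hyperplanes of `H''[Σ]` and facet hyperplanes of the cube lies in `½ℤ^n`. -/
theorem statement15 (n m : ℕ) (ends : Fin m → Sym2 (Fin n)) (sgn : Fin m → Bool)
    (half : Finset (Fin n)) (loose : Bool) :
    ∀ x : EucSp n, x ∈ unitCube n →
      ∀ S : Set (Set (EucSp n)),
        (∀ h ∈ S, h ∈ sgArrangementShifted ends sgn half loose ∨
          ∃ i : Fin n, h = {y : EucSp n | y i = 0} ∨ h = {y : EucSp n | y i = 1}) →
        ⋂₀ S = {x} →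
        ∀ i : Fin n, ∃ k : ℤ, x i = (k : ℝ) / 2 := by
  intro x _ S hS hx i
  set f : ℝ → ℝ := fun t => t + sin (2 * π * t)
  have hf0 : f 0 = 0 := by simp [f]
  have hf : ∀ t, f (1 - t) = 1 - f t := one_sub_add_sin_two_pi_mul
  have hfix : (fun y : EucSp n => f ∘ y) x = x := by
    refine eq_of_mapsTo_of_sInter_eq_singleton (fun h hh => ?_) hx
    rcases hS h hh with hh | ⟨j, rfl | rfl⟩
    · exact mapsTo_comp_of_mem_sgArrangementShifted hf hh
    · exact mapsTo_comp_setOf_apply_eq j hf0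
    · exact mapsTo_comp_setOf_apply_eq j (apply_one_of_symm hf0 hf)
  refine exists_int_eq_div_two_of_sin_two_pi_mul_eq_zero (x i) ?_
  have := congrFun hfix i
  simp only [Function.comp_apply, f] at this
  linarith
end
end

section
/- For a balanced signed graph Σ, the chromatic polynomial and the zero-free chromatic polynomial coincide: χ_Σ = χ*_Σ. -/
open scoped Classical
open MeasureTheory

noncomputable section

/-- A negative circle in a signed graph: a cycle (distinct edges, distinct nodes, given
cyclically with period `k`) whose sign product is `−1`. -/
def HasNegativeCircle {n m : ℕ} (ends : Fin m → Sym2 (Fin n)) (sgn : Fin m → Bool) : Prop :=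
  ∃ (k : ℕ) (e : ℕ → Fin m) (v : ℕ → Fin n), 0 < k ∧
    (∀ i, e (i + k) = e i) ∧ (∀ i, v (i + k) = v i) ∧
    (∀ i j, i < k → j < k → e i = e j → i = j) ∧
    (∀ i j, i < k → j < k → v i = v j → i = j) ∧
    (∀ i, ends (e i) = s(v i, v (i + 1))) ∧
    (∏ i ∈ Finset.range k, sgnVal (sgn (e i))) = -1

/-- A signed graph is balanced if it has no halfedges and no negative circle. -/
def IsBalanced {n m : ℕ} (ends : Fin m → Sym2 (Fin n)) (sgn : Fin m → Bool)
    (half : Finset (Fin n)) : Prop :=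
  half = ∅ ∧ ¬ HasNegativeCircle ends sgn

namespace St16

variable {n m : ℕ}

lemma sgnVal_cases (b : Bool) : sgnVal b = 1 ∨ sgnVal b = -1 := by
  cases b <;> simp [sgnVal]

lemma telescope (f : ℕ → ℤ) (hf : ∀ t, f t * f t = 1) (k : ℕ) :
    ∏ t ∈ Finset.range k, (f t * f (t + 1)) = f 0 * f k := by
  induction k with
  | zero => simp [(hf 0).symm]
  | succ k ih =>
      rw [Finset.prod_range_succ, ih]
      have := hf k
      linear_combination f 0 * f (k + 1) * this

lemma hnc_restrict (ends : Fin (m + 1) → Sym2 (Fin n)) (sgn : Fin (m + 1) → Bool)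
    (h : HasNegativeCircle (fun e => ends e.castSucc) (fun e => sgn e.castSucc)) :
    HasNegativeCircle ends sgn := by
  obtain ⟨k, e, v, hk, he, hv, hei, hvi, hends, hprod⟩ := h
  exact ⟨k, fun t => (e t).castSucc, v, hk, fun i => congrArg Fin.castSucc (he i), hv,
    fun i j hi hj hij => hei i j hi hj (Fin.castSucc_injective m hij), hvi, hends, hprod⟩

lemma hnc_loop (ends : Fin m → Sym2 (Fin n)) (sgn : Fin m → Bool) (E : Fin m) (a : Fin n)
    (hE : ends E = s(a, a)) (hsgn : sgn E = false) : HasNegativeCircle ends sgn :=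
  ⟨1, fun _ => E, fun _ => a, one_pos, fun _ => rfl, fun _ => rfl,
    fun i j hi hj _ => by omega, fun i j hi hj _ => by omega,
    fun _ => hE, by simp [hsgn, sgnVal]⟩

lemma hnc_of_path (ends : Fin (m + 1) → Sym2 (Fin n)) (sgn : Fin (m + 1) → Bool)
    (ζ : Fin n → ℤ) (hζ1 : ∀ i, ζ i = 1 ∨ ζ i = -1)
    (hζ : ∀ (e : Fin m) (i j : Fin n), ends e.castSucc = s(i, j) →
      sgnVal (sgn e.castSucc) = ζ i * ζ j)
    (a b : Fin n) (hab : a ≠ b) (hE : ends (Fin.last m) = s(a, b))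
    (hsgnE : sgnVal (sgn (Fin.last m)) = -(ζ a * ζ b))
    (hconn : Relation.ReflTransGen (fun u v => ∃ e : Fin m, ends e.castSucc = s(u, v)) a b) :
    HasNegativeCircle ends sgn := by
  set G : SimpleGraph (Fin n) :=
    SimpleGraph.fromRel (fun u v => ∃ e : Fin m, ends e.castSucc = s(u, v)) with hG
  have hreach : G.Reachable a b := by
    clear hab hE hsgnE
    induction hconn with
    | refl => exact SimpleGraph.Reachable.refl a
    | tail _ hstep ih =>
        rename_i c d _
        by_cases hcd : c = d
        · exact hcd ▸ ih
        · exact ih.trans (SimpleGraph.Adj.reachable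
            ((SimpleGraph.fromRel_adj _ _ _).mpr ⟨hcd, Or.inl hstep⟩))
  obtain ⟨W⟩ := hreach
  obtain ⟨p, hpath⟩ := W.toPath
  set L := p.support with hL
  set k := p.length with hk
  have hLlen : L.length = k + 1 := p.length_support
  set v : ℕ → Fin n := fun t => L.getD (t % (k + 1)) a with hvdef
  have hvlt : ∀ (t : ℕ) (ht : t < L.length), v t = L.get ⟨t, ht⟩ := by
    intro t ht
    simp only [hvdef]
    rw [Nat.mod_eq_of_lt (by omega)]
    exact List.getD_eq_get L a ⟨t, ht⟩
  have hv0 : v 0 = a := by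
    rw [hvlt 0 (by omega), List.get_mk_zero]
    exact p.head_support
  have hvk : v k = b := by
    rw [hvlt k (by omega)]
    have h1 : L.getLast (by rw [← List.length_pos_iff]; omega) = b := p.getLast_support
    rw [List.getLast_eq_getElem] at h1
    have h2 : L.get ⟨k, by omega⟩ = L.get ⟨L.length - 1, by omega⟩ := by
      congr 1
      exact Fin.ext (show k = L.length - 1 by omega)
    exact h2.trans h1
  have hvinj : ∀ s t, s ≤ k → t ≤ k → v s = v t → s = t := by
    intro s t hs ht hst
    rw [hvlt s (by omega), hvlt t (by omega)] at hst
    have hnd : L.Nodup := hpath.support_nodup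
    simpa using congrArg Fin.val (List.nodup_iff_injective_get.mp hnd hst)
  have hk1 : 1 ≤ k := by
    rcases Nat.eq_zero_or_pos k with h0 | h1
    · exfalso; apply hab; rw [← hv0, ← hvk, h0]
    · exact h1
  have hadj : ∀ t, t < k → ∃ e : Fin m, ends e.castSucc = s(v t, v (t + 1)) := by
    intro t ht
    have hch := List.isChain_iff_getElem.mp p.isChain_adj_support t (by rw [← hL, hLlen]; omega)
    rw [hvlt t (by omega), hvlt (t + 1) (by omega)]
    have hch' := (SimpleGraph.fromRel_adj
      (fun u v => ∃ e : Fin m, ends e.castSucc = s(u, v)) _ _).mp hch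
    rcases hch'.2 with ⟨e, he⟩ | ⟨e, he⟩
    · exact ⟨e, he⟩
    · exact ⟨e, by rw [he]; exact Sym2.eq_swap⟩
  have hselx : ∀ r : ℕ, ∃ e : Fin m, r < k → ends e.castSucc = s(v r, v (r + 1)) := by
    intro r
    by_cases hr : r < k
    · exact (hadj r hr).imp fun e he _ => he
    · exact ⟨(hadj 0 (by omega)).choose, fun hc => absurd hc hr⟩
  choose sel hsel using hselx
  set e : ℕ → Fin (m + 1) :=
    fun t => if t % (k + 1) = k then Fin.last m else (sel (t % (k + 1))).castSucc with hedef
  have hmodsmall : ∀ t, t ≤ k → t % (k + 1) = t := fun t ht => Nat.mod_eq_of_lt (by omega)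
  have heval : ∀ t, t ≤ k → e t = if t = k then Fin.last m else (sel t).castSucc := by
    intro t ht
    simp only [hedef]
    rw [hmodsmall t ht]
  refine ⟨k + 1, e, v, by omega, ?_, ?_, ?_, ?_, ?_, ?_⟩
  · intro i; simp only [hedef, Nat.add_mod_right]
  · intro i; simp only [hvdef, Nat.add_mod_right]
  · intro i j hi hj hij
    rw [heval i (by omega), heval j (by omega)] at hij
    by_cases hik : i = k <;> by_cases hjk : j = k
    · omega
    · rw [if_pos hik, if_neg hjk] at hij
      exact absurd hij.symm (ne_of_lt (Fin.castSucc_lt_last _))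
    · rw [if_neg hik, if_pos hjk] at hij
      exact absurd hij (ne_of_lt (Fin.castSucc_lt_last _))
    · rw [if_neg hik, if_neg hjk] at hij
      have hsij := Fin.castSucc_injective m hij
      have h1 := hsel i (by omega)
      have h2 := hsel j (by omega)
      rw [hsij] at h1
      rcases Sym2.eq_iff.mp (h1.symm.trans h2) with ⟨ha1, ha2⟩ | ⟨ha1, ha2⟩
      · exact hvinj i j (by omega) (by omega) ha1
      · have e1 := hvinj i (j + 1) (by omega) (by omega) ha1
        have e2 := hvinj (i + 1) j (by omega) (by omega) ha2
        omega
  · intro i j hi hj hij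
    exact hvinj i j (by omega) (by omega) hij
  · intro i
    set r := i % (k + 1) with hr
    have hrlt : r < k + 1 := Nat.mod_lt _ (by omega)
    have hvi : v i = v r := by
      simp only [hvdef, ← hr, Nat.mod_eq_of_lt hrlt]
    have hvi1 : v (i + 1) = v (r + 1) := by
      simp only [hvdef]
      congr 1
      conv_lhs => rw [Nat.add_mod, ← hr]
      conv_rhs => rw [Nat.add_mod, Nat.mod_eq_of_lt hrlt]
    have hei : e i = e r := by
      simp only [hedef, ← hr, Nat.mod_eq_of_lt hrlt]
    rw [hvi, hvi1, hei]
    by_cases hrk : r = k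
    · rw [hrk]
      rw [heval k le_rfl, if_pos rfl, hE]
      have hvk1 : v (k + 1) = v 0 := by
        simp only [hvdef, Nat.mod_self, Nat.zero_mod]
      rw [hvk1, hv0, hvk]
      exact Sym2.eq_swap
    · rw [heval r (by omega), if_neg hrk]
      exact hsel r (by omega)
  · rw [Finset.prod_range_succ]
    have h1 : ∀ t ∈ Finset.range k, sgnVal (sgn (e t)) = ζ (v t) * ζ (v (t + 1)) := by
      intro t ht
      rw [Finset.mem_range] at ht
      rw [heval t (by omega), if_neg (by omega : ¬ t = k)]
      exact hζ (sel t) _ _ (hsel t ht)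
    rw [Finset.prod_congr rfl h1,
      telescope (fun t => ζ (v t))
        (fun t => by
          show ζ (v t) * ζ (v t) = 1
          rcases hζ1 (v t) with h | h <;> rw [h] <;> norm_num) k]
    rw [heval k le_rfl, if_pos rfl]
    show ζ (v 0) * ζ (v k) * sgnVal (sgn (Fin.last m)) = -1
    rw [hv0, hvk, hsgnE]
    have hza : ζ a * ζ a = 1 := by rcases hζ1 a with h | h <;> rw [h] <;> ring
    have hzb : ζ b * ζ b = 1 := by rcases hζ1 b with h | h <;> rw [h] <;> ring
    linear_combination (- (ζ b * ζ b)) * hza - hzb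



variable {n m : ℕ}

def Qe (ends : Fin m → Sym2 (Fin n)) (x : Fin n → ℤ) (e : Fin m) : Prop :=
  ∀ i j : Fin n, ends e = s(i, j) → x j ≠ x i

def gcount (ends : Fin m → Sym2 (Fin n)) (T : Finset ℤ) : ℕ :=
  ((Fintype.piFinset fun _ : Fin n => T).filter fun x => ∀ e, Qe ends x e).card

def relS (ends : Fin m → Sym2 (Fin n)) (S : Finset (Fin m)) (u v : Fin n) : Prop :=
  ∃ e ∈ S, ends e = s(u, v)

def kS (ends : Fin m → Sym2 (Fin n)) (S : Finset (Fin m)) : ℕ :=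
  Nat.card (Quotient (Relation.EqvGen.setoid (relS ends S)))

lemma notQe_iff (ends : Fin m → Sym2 (Fin n)) (x : Fin n → ℤ) (e : Fin m) :
    ¬ Qe ends x e ↔ ∀ i j : Fin n, ends e = s(i, j) → x i = x j := by
  constructor
  · intro h i j hij
    rw [Qe] at h; push_neg at h
    obtain ⟨a, b, hab, hx⟩ := h
    rw [hij] at hab
    rcases Sym2.eq_iff.mp hab with ⟨h1, h2⟩ | ⟨h1, h2⟩ <;> subst h1 <;> subst h2
    · exact hx.symm
    · exact hx
  · intro h hQ
    obtain ⟨⟨i, j⟩, hij⟩ := Quot.exists_rep (ends e)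
    have hij' : ends e = s(i, j) := hij.symm
    exact hQ i j hij' (h i j hij').symm

lemma respects_iff (ends : Fin m → Sym2 (Fin n)) (S : Finset (Fin m)) (x : Fin n → ℤ) :
    (∀ e ∈ S, ¬ Qe ends x e) ↔ ∀ u v, relS ends S u v → x u = x v := by
  constructor
  · rintro h u v ⟨e, he, hends⟩
    exact (notQe_iff ends x e).mp (h e he) u v hends
  · intro h e he
    rw [notQe_iff]
    intro i j hij
    exact h i j ⟨e, he, hij⟩

lemma respects_eqvGen (ends : Fin m → Sym2 (Fin n)) (S : Finset (Fin m)) (x : Fin n → ℤ)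
    (h : ∀ u v, relS ends S u v → x u = x v) :
    ∀ u v, Relation.EqvGen (relS ends S) u v → x u = x v := by
  intro u v huv
  induction huv with
  | rel a b hab => exact h a b hab
  | refl a => rfl
  | symm a b _ ih => exact ih.symm
  | trans a b c _ _ ih1 ih2 => exact ih1.trans ih2

lemma card_forced (ends : Fin m → Sym2 (Fin n)) (S : Finset (Fin m)) (T : Finset ℤ) :
    ((Fintype.piFinset fun _ : Fin n => T).filter fun x => ∀ e ∈ S, ¬ Qe ends x e).card
      = T.card ^ kS ends S := by
  set s : Setoid (Fin n) := Relation.EqvGen.setoid (relS ends S) with hs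
  rw [← Nat.card_eq_finsetCard]
  have key : Nat.card {x // x ∈ (Fintype.piFinset fun _ : Fin n => T).filter
      fun x => ∀ e ∈ S, ¬ Qe ends x e} = Nat.card (Quotient s → {z // z ∈ T}) := by
    refine Nat.card_congr ?_
    refine
      { toFun := fun x q => ⟨x.1 q.out, ?_⟩
        invFun := fun y => ⟨fun i => (y (Quotient.mk s i)).1, ?_⟩
        left_inv := ?_
        right_inv := ?_ }
    · have hx := (Finset.mem_filter.mp x.2).1
      exact Fintype.mem_piFinset.mp hx q.out
    · rw [Finset.mem_filter]
      constructor
      · exact Fintype.mem_piFinset.mpr fun i => (y (Quotient.mk s i)).2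
      · rw [respects_iff]
        intro u v huv
        have : Quotient.mk s u = Quotient.mk s v := Quotient.sound (Relation.EqvGen.rel u v huv)
        rw [this]
    · intro x
      ext i
      have hresp := (respects_iff ends S x.1).mp (Finset.mem_filter.mp x.2).2
      exact respects_eqvGen ends S x.1 hresp _ _ (Quotient.mk_out i)
    · intro y
      funext q
      ext
      simp only
      rw [Quotient.out_eq]
  rw [key, Nat.card_fun, Nat.card_eq_finsetCard, kS]

lemma gcount_eq (ends : Fin m → Sym2 (Fin n)) (T : Finset ℤ) :
    (gcount ends T : ℚ)
      = ∑ S ∈ (Finset.univ : Finset (Fin m)).powerset,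
          (-1 : ℚ) ^ S.card * (T.card : ℚ) ^ kS ends S := by
  rw [gcount, ← Finset.sum_boole]
  have step1 : ∀ x : Fin n → ℤ,
      (if (∀ e, Qe ends x e) then (1 : ℚ) else 0)
        = ∏ e : Fin m, ((-(if ¬ Qe ends x e then (1 : ℚ) else 0)) + 1) := by
    intro x
    have h1 : ∀ e : Fin m,
        (-(if ¬ Qe ends x e then (1 : ℚ) else 0)) + 1 = if Qe ends x e then 1 else 0 := by
      intro e; by_cases h : Qe ends x e <;> simp [h]
    rw [Finset.prod_congr rfl fun e _ => h1 e, Finset.prod_boole]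
    simp
  calc (∑ x ∈ Fintype.piFinset fun _ : Fin n => T,
          if (∀ e, Qe ends x e) then (1 : ℚ) else 0)
      = ∑ x ∈ Fintype.piFinset fun _ : Fin n => T,
          ∏ e : Fin m, ((-(if ¬ Qe ends x e then (1 : ℚ) else 0)) + 1) :=
        Finset.sum_congr rfl fun x _ => step1 x
    _ = ∑ x ∈ Fintype.piFinset fun _ : Fin n => T,
          ∑ S ∈ (Finset.univ : Finset (Fin m)).powerset,
            (∏ e ∈ S, -(if ¬ Qe ends x e then (1 : ℚ) else 0)) *
              ∏ e ∈ Finset.univ \ S, (1 : ℚ) := by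
        refine Finset.sum_congr rfl fun x _ => ?_
        exact Finset.prod_add _ _ _
    _ = ∑ S ∈ (Finset.univ : Finset (Fin m)).powerset,
          (-1 : ℚ) ^ S.card * (T.card : ℚ) ^ kS ends S := by
        rw [Finset.sum_comm]
        refine Finset.sum_congr rfl fun S _ => ?_
        have hx : ∀ x : Fin n → ℤ,
            (∏ e ∈ S, -(if ¬ Qe ends x e then (1 : ℚ) else 0)) * ∏ e ∈ Finset.univ \ S, (1 : ℚ)
              = (-1 : ℚ) ^ S.card * (if (∀ e ∈ S, ¬ Qe ends x e) then 1 else 0) := by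
          intro x
          rw [Finset.prod_const_one, mul_one]
          rw [show (fun e => -(if ¬ Qe ends x e then (1:ℚ) else 0))
              = fun e => (-1) * (if ¬ Qe ends x e then (1:ℚ) else 0) by funext e; ring]
          rw [Finset.prod_mul_distrib, Finset.prod_const, Finset.prod_boole]
          congr 1
          congr 1
        rw [Finset.sum_congr rfl fun x _ => hx x, ← Finset.mul_sum]
        rw [show (fun x => if ∀ e ∈ S, ¬ Qe ends x e then (1:ℚ) else 0)
            = fun x => if ∀ i ∈ S, ¬ Qe ends x i then (1:ℚ) else 0 from rfl] at *
        rw [Finset.sum_boole, card_forced]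
        push_cast
        ring

def rpoly (ends : Fin m → Sym2 (Fin n)) : Polynomial ℚ :=
  ∑ S ∈ (Finset.univ : Finset (Fin m)).powerset,
    Polynomial.C ((-1 : ℚ) ^ S.card) * Polynomial.X ^ kS ends S

lemma rpoly_eval (ends : Fin m → Sym2 (Fin n)) (T : Finset ℤ) :
    (rpoly ends).eval ((T.card : ℚ)) = gcount ends T := by
  rw [gcount_eq, rpoly]
  simp [Polynomial.eval_finset_sum]



lemma exists_switch {n : ℕ} : ∀ {m : ℕ} (ends : Fin m → Sym2 (Fin n)) (sgn : Fin m → Bool),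
    ¬ HasNegativeCircle ends sgn →
    ∃ ζ : Fin n → ℤ, (∀ i, ζ i = 1 ∨ ζ i = -1) ∧
      ∀ (e : Fin m) (i j : Fin n), ends e = s(i, j) → sgnVal (sgn e) = ζ i * ζ j := by
  intro m
  induction m with
  | zero => exact fun ends sgn _ => ⟨fun _ => 1, fun _ => Or.inl rfl, fun e => e.elim0⟩
  | succ m ih =>
    intro ends sgn h
    obtain ⟨ζ, hζ1, hζ⟩ := ih (fun e => ends e.castSucc) (fun e => sgn e.castSucc)
      (fun hc => h (hnc_restrict ends sgn hc))
    obtain ⟨⟨a, b⟩, hab'⟩ := Quot.exists_rep (ends (Fin.last m))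
    have hE : ends (Fin.last m) = s(a, b) := hab'.symm
    have finish : ∀ ζ' : Fin n → ℤ, (∀ i, ζ' i = 1 ∨ ζ' i = -1) →
        (∀ (e : Fin m) (i j : Fin n), ends e.castSucc = s(i, j) →
          sgnVal (sgn e.castSucc) = ζ' i * ζ' j) →
        sgnVal (sgn (Fin.last m)) = ζ' a * ζ' b →
        ∃ ζ : Fin n → ℤ, (∀ i, ζ i = 1 ∨ ζ i = -1) ∧
          ∀ (e : Fin (m + 1)) (i j : Fin n), ends e = s(i, j) →
            sgnVal (sgn e) = ζ i * ζ j := by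
      intro ζ' h1 h2 h3
      refine ⟨ζ', h1, fun e i j hij => ?_⟩
      rcases Fin.eq_castSucc_or_eq_last e with ⟨e', rfl⟩ | rfl
      · exact h2 e' i j hij
      · rcases Sym2.eq_iff.mp (hE.symm.trans hij) with ⟨rfl, rfl⟩ | ⟨rfl, rfl⟩
        · exact h3
        · rw [h3]; ring
    by_cases hcompat : sgnVal (sgn (Fin.last m)) = ζ a * ζ b
    · exact finish ζ hζ1 hζ hcompat
    · have hsgnE : sgnVal (sgn (Fin.last m)) = -(ζ a * ζ b) := by
        rcases sgnVal_cases (sgn (Fin.last m)) with h' | h' <;>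
          rcases hζ1 a with ha | ha <;> rcases hζ1 b with hb | hb <;>
          rw [h', ha, hb] at hcompat ⊢ <;> norm_num at hcompat <;> norm_num
      by_cases haa : a = b
      · subst haa
        have h1 : ζ a * ζ a = 1 := by rcases hζ1 a with h' | h' <;> rw [h'] <;> norm_num
        have h2 : sgnVal (sgn (Fin.last m)) = -1 := by rw [hsgnE, h1]
        have hfalse : sgn (Fin.last m) = false := by
          rcases Bool.eq_false_or_eq_true (sgn (Fin.last m)) with h' | h'
          · rw [h'] at h2; norm_num [sgnVal] at h2
          · exact h'
        exact absurd (hnc_loop ends sgn (Fin.last m) a hE hfalse) h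
      · have hsymm : Symmetric (fun u v : Fin n => ∃ e : Fin m, ends e.castSucc = s(u, v)) := by
          rintro u v' ⟨e, he⟩
          exact ⟨e, by rw [he]; exact Sym2.eq_swap⟩
        by_cases hconn :
            Relation.ReflTransGen (fun u v => ∃ e : Fin m, ends e.castSucc = s(u, v)) a b
        · exact absurd (hnc_of_path ends sgn ζ hζ1 hζ a b haa hE hsgnE hconn) h
        · set Conn : Fin n → Prop :=
            fun i => Relation.ReflTransGen (fun u v => ∃ e : Fin m, ends e.castSucc = s(u, v)) b i
            with hConn
          set ζ' : Fin n → ℤ := fun i => if Conn i then -ζ i else ζ i with hζ'def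
          have hζ'1 : ∀ i, ζ' i = 1 ∨ ζ' i = -1 := by
            intro i
            by_cases hc : Conn i <;> simp only [hζ'def, if_pos, if_neg, hc, if_true, if_false] <;>
              rcases hζ1 i with h' | h' <;> rw [h'] <;> norm_num
          have hstep : ∀ u v', (∃ e : Fin m, ends e.castSucc = s(u, v')) →
              (Conn u ↔ Conn v') := by
            intro u v' hedge
            exact ⟨fun hc => hc.tail hedge, fun hc => hc.tail (hsymm hedge)⟩
          refine finish ζ' hζ'1 ?_ ?_
          · intro e i j hij
            by_cases hc : Conn i
            · have hcj : Conn j := (hstep i j ⟨e, hij⟩).mp hc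
              simp only [hζ'def, if_pos hc, if_pos hcj]
              rw [hζ e i j hij]; ring
            · have hcj : ¬ Conn j := fun hcj => hc ((hstep i j ⟨e, hij⟩).mpr hcj)
              simp only [hζ'def, if_neg hc, if_neg hcj]
              exact hζ e i j hij
          · have hca : ¬ Conn a := fun hc => by
              haveI : Std.Symm (fun u v : Fin n => ∃ e : Fin m, ends e.castSucc = s(u, v)) :=
                ⟨fun x y h => hsymm h⟩
              exact hconn (Std.Symm.symm _ _ hc)
            have hcb : Conn b := Relation.ReflTransGen.refl
            simp only [hζ'def, if_neg hca, if_pos hcb]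
            rw [hsgnE]; ring


lemma ncard_proper {n m : ℕ} (ends : Fin m → Sym2 (Fin n)) (sgn : Fin m → Bool)
    (ζ : Fin n → ℤ) (hζ1 : ∀ i, ζ i = 1 ∨ ζ i = -1)
    (hζ : ∀ (e : Fin m) (i j : Fin n), ends e = s(i, j) → sgnVal (sgn e) = ζ i * ζ j)
    (T : Finset ℤ) (hT : ∀ z : ℤ, z ∈ T → -z ∈ T) :
    Set.ncard {x : Fin n → ℤ | (∀ i, x i ∈ T) ∧ SgProper ends sgn ∅ false x}
      = gcount ends T := by
  have hzz : ∀ i, ζ i * ζ i = 1 := fun i => by rcases hζ1 i with h | h <;> rw [h] <;> norm_num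
  have hζ0 : ∀ i, ζ i ≠ 0 := fun i => by rcases hζ1 i with h | h <;> rw [h] <;> norm_num
  set σf : (Fin n → ℤ) → (Fin n → ℤ) := fun x i => ζ i * x i with hσf
  have hinv : Function.Involutive σf := by
    intro x
    funext i
    show ζ i * (ζ i * x i) = x i
    rw [← mul_assoc, hzz i, one_mul]
  have hmemT : ∀ (z : ℤ) (i : Fin n), z ∈ T → ζ i * z ∈ T := by
    intro z i hz
    rcases hζ1 i with h | h <;> rw [h]
    · rwa [one_mul]
    · rw [neg_one_mul]; exact hT z hz
  set B : Set (Fin n → ℤ) := {x | (∀ i, x i ∈ T) ∧ ∀ e, Qe ends x e} with hB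
  have himg : {x : Fin n → ℤ | (∀ i, x i ∈ T) ∧ SgProper ends sgn ∅ false x} = σf '' B := by
    ext x
    constructor
    · intro hx
      refine ⟨σf x, ⟨fun i => hmemT _ i (hx.1 i), ?_⟩, hinv x⟩
      intro e i j hij heq
      apply hx.2.2.1 e i j hij
      have h1 : ζ j * (ζ j * x j) = ζ j * (ζ i * x i) := by
        show ζ j * (σf x j) = ζ j * (σf x i); rw [heq]
      rw [← mul_assoc, hzz j, one_mul] at h1
      rw [h1, hζ e i j hij]
      ring
    · rintro ⟨y, ⟨hyT, hyQ⟩, rfl⟩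
      refine ⟨fun i => hmemT _ i (hyT i), rfl, ?_, fun i hi => absurd hi (Finset.notMem_empty i)⟩
      intro e i j hij heq
      apply hyQ e i j hij
      have h1 : ζ j * y j = (ζ i * ζ j) * (ζ i * y i) := by
        calc ζ j * y j = σf y j := rfl
          _ = sgnVal (sgn e) * σf y i := heq
          _ = (ζ i * ζ j) * (ζ i * y i) := by rw [hζ e i j hij]
      have h2 : (ζ i * ζ j) * (ζ i * y i) = (ζ i * ζ i) * (ζ j * y i) := by ring
      rw [h2, hzz i, one_mul] at h1
      exact mul_left_cancel₀ (hζ0 j) h1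
  rw [himg, Set.ncard_image_of_injective _ hinv.injective]
  have hBset : B = ↑((Fintype.piFinset fun _ : Fin n => T).filter fun x => ∀ e, Qe ends x e) := by
    ext x
    simp only [hB, Set.mem_setOf_eq, Finset.coe_filter, Fintype.mem_piFinset]
  rw [hBset, Set.ncard_coe_finset]
  rfl

lemma poly_key (r r' : Polynomial ℚ) (f : ℕ → ℚ) (hf : Function.Injective f)
    (hfe : ∀ c, r.eval (f c) = r'.eval (f c)) : r = r' := by
  apply Polynomial.eq_of_infinite_eval_eq
  exact Set.infinite_of_injective_forall_mem hf fun c => hfe c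

end St16

/-- Corollary 5.8: for a balanced signed graph the chromatic polynomial
and the zero-free chromatic polynomial coincide (as polynomials; they are determined by
their values `χ_Σ(2c+1)` and `χ*_Σ(2c)`). -/
theorem statement16 (n m : ℕ) (ends : Fin m → Sym2 (Fin n)) (sgn : Fin m → Bool)
    (half : Finset (Fin n)) (loose : Bool)
    (hbal : IsBalanced ends sgn half) :
    ∀ p q : Polynomial ℚ,
      (∀ c : ℕ, p.eval ((2 * c + 1 : ℕ) : ℚ) = sgChi ends sgn half loose c) →
      (∀ c : ℕ, q.eval ((2 * c : ℕ) : ℚ) = sgChiStar ends sgn half loose c) →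
      p = q := by
  obtain ⟨hhalf, hneg⟩ := hbal
  subst hhalf
  intro p q hp hq
  have hinjodd : Function.Injective (fun c : ℕ => ((2 * c + 1 : ℕ) : ℚ)) := by
    intro a b hab
    have : (2 * a + 1 : ℕ) = 2 * b + 1 := Nat.cast_injective hab
    omega
  have hinjeven : Function.Injective (fun c : ℕ => ((2 * c : ℕ) : ℚ)) := by
    intro a b hab
    have : (2 * a : ℕ) = 2 * b := Nat.cast_injective hab
    omega
  cases loose with
  | true =>
    have hz1 : ∀ c : ℕ, sgChi ends sgn ∅ true c = 0 := by
      intro c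
      rw [sgChi]
      convert Set.ncard_empty (Fin n → ℤ) using 2
      ext x
      simp [SgProper]
    have hz2 : ∀ c : ℕ, sgChiStar ends sgn ∅ true c = 0 := by
      intro c
      rw [sgChiStar]
      convert Set.ncard_empty (Fin n → ℤ) using 2
      ext x
      simp [SgProper]
    have hp0 : p = 0 := by
      refine St16.poly_key p 0 _ hinjodd fun c => ?_
      rw [hp c, hz1 c]
      simp
    have hq0 : q = 0 := by
      refine St16.poly_key q 0 _ hinjeven fun c => ?_
      rw [hq c, hz2 c]
      simp
    rw [hp0, hq0]
  | false =>
    obtain ⟨ζ, hζ1, hζ⟩ := St16.exists_switch ends sgn hneg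
    have hchi : ∀ c : ℕ, (sgChi ends sgn ∅ false c : ℚ)
        = (St16.rpoly ends).eval ((2 * c + 1 : ℕ) : ℚ) := by
      intro c
      have hT : ∀ z : ℤ, z ∈ Finset.Icc (-(c : ℤ)) c → -z ∈ Finset.Icc (-(c : ℤ)) c := by
        intro z hz
        simp only [Finset.mem_Icc] at hz ⊢
        omega
      have hcard : (Finset.Icc (-(c : ℤ)) c).card = 2 * c + 1 := by
        rw [Int.card_Icc]
        omega
      have h1 := St16.ncard_proper ends sgn ζ hζ1 hζ _ hT
      have hset : {x : Fin n → ℤ | (∀ i, x i ∈ Finset.Icc (-(c : ℤ)) c)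
            ∧ SgProper ends sgn ∅ false x}
          = {x : Fin n → ℤ | (∀ i, |x i| ≤ (c : ℤ)) ∧ SgProper ends sgn ∅ false x} := by
        ext x
        simp only [Set.mem_setOf_eq, Finset.mem_Icc, abs_le, and_comm]
      rw [hset] at h1
      rw [sgChi, h1, ← St16.rpoly_eval ends (Finset.Icc (-(c : ℤ)) c), hcard]
    have hchistar : ∀ c : ℕ, (sgChiStar ends sgn ∅ false c : ℚ)
        = (St16.rpoly ends).eval ((2 * c : ℕ) : ℚ) := by
      intro c
      have hT : ∀ z : ℤ, z ∈ (Finset.Icc (-(c : ℤ)) c).erase 0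
          → -z ∈ (Finset.Icc (-(c : ℤ)) c).erase 0 := by
        intro z hz
        simp only [Finset.mem_erase, Finset.mem_Icc] at hz ⊢
        omega
      have hcard : ((Finset.Icc (-(c : ℤ)) c).erase 0).card = 2 * c := by
        rw [Finset.card_erase_of_mem (by simp), Int.card_Icc]
        omega
      have h1 := St16.ncard_proper ends sgn ζ hζ1 hζ _ hT
      have hset : {x : Fin n → ℤ | (∀ i, x i ∈ (Finset.Icc (-(c : ℤ)) c).erase 0)
            ∧ SgProper ends sgn ∅ false x}
          = {x : Fin n → ℤ | (∀ i, x i ≠ 0 ∧ |x i| ≤ (c : ℤ))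
              ∧ SgProper ends sgn ∅ false x} := by
        ext x
        simp only [Set.mem_setOf_eq, Finset.mem_erase, Finset.mem_Icc, abs_le]
      rw [hset] at h1
      rw [sgChiStar, h1, ← St16.rpoly_eval ends ((Finset.Icc (-(c : ℤ)) c).erase 0), hcard]
    have hpr : p = St16.rpoly ends := by
      refine St16.poly_key p (St16.rpoly ends) _ hinjodd fun c => ?_
      rw [hp c, hchi c]
    have hqr : q = St16.rpoly ends := by
      refine St16.poly_key q (St16.rpoly ends) _ hinjeven fun c => ?_
      rw [hq c, hchistar c]
    rw [hpr, hqr]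
end
end
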